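/- The map L_d^n → ℤ/Fℤ sending a tuple c to val(c) mod F is a bijection. -/

import Mathlib

/-- `F = Σ_{k=0}^n x^(n−k)·y^k`. -/
def Fval (n x y : ℕ) : ℕ := ∑ k ∈ Finset.range (n + 1), x ^ (n - k) * y ^ k

/-- The stable decomposition `v = Σ_{k=0}^n c_k·x^(n−k)·y^k + m·y^(n+1)`
with digits `c_k ∈ {0,…,y−1}`. -/
def IsStableDecomp (n x y : ℕ) (v : ℤ) (c : Fin (n + 1) → ℕ) (m : ℤ) : Prop :=
  (∀ k : Fin (n + 1), c k < y) ∧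
    v = (∑ k : Fin (n + 1), (c k : ℤ) * (x : ℤ) ^ (n - (k : ℕ)) * (y : ℤ) ^ (k : ℕ))
          + m * (y : ℤ) ^ (n + 1)

/-- `L_d^n`: tuples `(c_0,…,c_{n+1})` with `c_{n+1} = 0` matched by
`[0,y−1]*·0·[1,x]*·0`. -/
def Ld (n x y : ℕ) : Set (Fin (n + 2) → ℕ) :=
  {c | c (Fin.last (n + 1)) = 0 ∧ ∃ k : Fin (n + 1),
    (∀ i : Fin (n + 2), (i : ℕ) < (k : ℕ) → c i < y) ∧
    c k.castSucc = 0 ∧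
    (∀ i : Fin (n + 2), (k : ℕ) < (i : ℕ) → (i : ℕ) ≤ n → 1 ≤ c i ∧ c i ≤ x)}

/-- `L_a^n`: tuples `(c_0,…,c_{n+1})` with `c_{n+1} = 0` matched by
`[1,y]*·0·[0,x−1]*·0`. -/
def La (n x y : ℕ) : Set (Fin (n + 2) → ℕ) :=
  {c | c (Fin.last (n + 1)) = 0 ∧ ∃ k : Fin (n + 1),
    (∀ i : Fin (n + 2), (i : ℕ) < (k : ℕ) → 1 ≤ c i ∧ c i ≤ y) ∧
    c k.castSucc = 0 ∧
    (∀ i : Fin (n + 2), (k : ℕ) < (i : ℕ) → (i : ℕ) ≤ n → c i < x)}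

/-- The value `val(c) = Σ_{k=0}^n c_k·x^(n−k)·y^k` of a tuple. -/
def tupleVal (n x y : ℕ) (c : Fin (n + 2) → ℕ) : ℕ :=
  ∑ k : Fin (n + 1), c k.castSucc * x ^ (n - (k : ℕ)) * y ^ (k : ℕ)

/-- `G = {val(c) : c ∈ L_d^n}` viewed as a set of integers. -/
def Gset (n x y : ℕ) : Set ℤ := {w | ∃ c ∈ Ld n x y, (tupleVal n x y c : ℤ) = w}

/-- Arcmonic value `g_k(j)` of arc number `j` at vertex `u_k`. -/
def gk (n x y k j : ℕ) : ℕ :=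
  if j ≤ x then j * x ^ (n - k) * y ^ k else (x + y - j) * x ^ (n - k + 1) * y ^ (k - 1)

/-- Arcmonic value of a rotor configuration `ρ : {1,…,n} → {0,…,x+y−1}`,
encoded with `ρ k` the arc chosen at vertex `u_{k+1}` for `k : Fin n`. -/
def gRotor (n x y : ℕ) (ρ : Fin n → ℕ) : ℕ := ∑ k : Fin n, gk n x y ((k : ℕ) + 1) (ρ k)

/-!
Write `val c = Σ c_k x^(n-k) y^k`. Digits below `y` are determined by the value: modulo `y`
the lowest digit is fixed because `x` is a unit mod `y`, and dividing out `y` passes to the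
remaining digits. If two words of `L_d^n` had values `v ≤ v'` with `v' = v + tF`, `t > 0`, then
`v'` would also be the value of the word `c + t`, all of whose digits are positive. Comparing
the two digit strings from the bottom, the carry is nonnegative while reading the `[0, y-1]*`
part, becomes positive at the distinguished `0`, and stays positive through the `[1, x]*` part,
which is impossible at the top digit. So `val` is injective mod `F`, and `L_d^n` has exactly
`Σ_k y^k x^(n-k) = F` elements.
-/

open Finset

def digitVal (x y m : ℕ) (d : Fin (m + 1) → ℕ) : ℕ :=
  ∑ i : Fin (m + 1), d i * x ^ (m - (i : ℕ)) * y ^ (i : ℕ)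

/-- The digit strings of `L_d^n` without the trailing `0`: the pattern `[0,y−1]*·0·[1,x]*`. -/
def IsLdDigits (x y m : ℕ) (c : Fin (m + 1) → ℕ) : Prop :=
  ∃ k, (∀ i < k, c i < y) ∧ c k = 0 ∧ ∀ i, k < i → 1 ≤ c i ∧ c i ≤ x

namespace IsLdDigits

variable {x y m : ℕ} {c : Fin (m + 1) → ℕ}

lemma lt (hxy : x < y) (hc : IsLdDigits x y m c) (i : Fin (m + 1)) : c i < y := by
  obtain ⟨k, hlt, hk, hgt⟩ := hc
  rcases lt_trichotomy i k with h | rfl | h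
  · exact hlt i h
  · omega
  · exact (hgt i h).2.trans_lt hxy

lemma zero {c : Fin 1 → ℕ} (hc : IsLdDigits x y 0 c) : c 0 = 0 := by
  obtain ⟨k, -, hk, -⟩ := hc
  rwa [Fin.fin_one_eq_zero k] at hk

lemma cons_cases {c : Fin (m + 2) → ℕ} (hc : IsLdDigits x y (m + 1) c) :
    (c 0 = 0 ∧ ∀ j, Fin.tail c j ≤ x) ∨ IsLdDigits x y m (Fin.tail c) := by
  obtain ⟨k, hlt, hk, hgt⟩ := hc
  cases k using Fin.cases with
  | zero => exact .inl ⟨hk, fun j => (hgt j.succ j.succ_pos).2⟩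
  | succ k =>
    exact .inr ⟨k, fun i hi => hlt i.succ (Fin.succ_lt_succ_iff.2 hi), hk,
      fun i hi => hgt i.succ (Fin.succ_lt_succ_iff.2 hi)⟩

end IsLdDigits

section Digits

variable {x y : ℕ}

lemma digitVal_zero (d : Fin 1 → ℕ) : digitVal x y 0 d = d 0 := by
  simp [digitVal]

lemma digitVal_succ {m : ℕ} (d : Fin (m + 2) → ℕ) :
    digitVal x y (m + 1) d = d 0 * x ^ (m + 1) + y * digitVal x y m (Fin.tail d) := by
  rw [digitVal, digitVal, Fin.sum_univ_succ, Finset.mul_sum]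
  simp only [Fin.val_zero, Nat.sub_zero, pow_zero, mul_one, Fin.val_succ, Fin.tail]
  congr 1
  refine Finset.sum_congr rfl fun j _ => ?_
  rw [show m + 1 - (j + 1) = m - j by omega, pow_succ]
  ring

lemma digitVal_add_const {m : ℕ} (t : ℕ) (d : Fin (m + 1) → ℕ) :
    digitVal x y m (fun i => d i + t) = digitVal x y m d + t * Fval m x y := by
  rw [Fval, ← Fin.sum_univ_eq_sum_range (fun k => x ^ (m - k) * y ^ k), digitVal, digitVal,
    Finset.mul_sum, ← Finset.sum_add_distrib]
  exact Finset.sum_congr rfl fun i _ => by ring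

lemma exists_carry (hy : 0 < y) (hcop : x.Coprime y) {m s : ℕ} {c d : Fin (m + 2) → ℕ}
    (hc : c 0 < y) (h : digitVal x y (m + 1) c = digitVal x y (m + 1) d + s * x ^ (m + 2)) :
    ∃ q, d 0 + s * x = c 0 + y * q ∧
      digitVal x y m (Fin.tail c) = digitVal x y m (Fin.tail d) + q * x ^ (m + 1) := by
  rw [digitVal_succ, digitVal_succ] at h
  set C := digitVal x y m (Fin.tail c)
  set D := digitVal x y m (Fin.tail d)
  have h' : c 0 * x ^ (m + 1) + y * C = (d 0 + s * x) * x ^ (m + 1) + y * D := by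
    rw [h]; ring
  have hmod : c 0 ≡ d 0 + s * x [MOD y] := by
    refine Nat.ModEq.cancel_right_of_coprime (hcop.pow_left (m + 1)).symm ?_
    simpa [Nat.ModEq, Nat.add_mul_mod_self_left] using congrArg (· % y) h'
  have hq : d 0 + s * x = c 0 + y * ((d 0 + s * x) / y) := by
    have := Nat.div_add_mod (d 0 + s * x) y
    rw [← hmod, Nat.mod_eq_of_lt hc] at this
    omega
  refine ⟨_, hq, Nat.eq_of_mul_eq_mul_left hy ?_⟩
  rw [hq] at h'
  linarith

lemma digits_eq_of_digitVal_eq (hy : 0 < y) (hcop : x.Coprime y) :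
    ∀ {m : ℕ} {c d : Fin (m + 1) → ℕ}, (∀ i, c i < y) → (∀ i, d i < y) →
      digitVal x y m c = digitVal x y m d → c = d
  | 0, c, d, _, _, h => by
    rw [digitVal_zero, digitVal_zero] at h
    ext i
    rwa [Fin.fin_one_eq_zero i]
  | m + 1, c, d, hc, hd, h => by
    obtain ⟨q, hq, htail⟩ := exists_carry hy hcop (s := 0) (hc 0) (by simpa using h)
    obtain rfl : q = 0 := by
      by_contra hq0
      have : y ≤ y * q := Nat.le_mul_of_pos_right y (Nat.pos_of_ne_zero hq0)
      have := hd 0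
      omega
    have htail' : Fin.tail c = Fin.tail d :=
      digits_eq_of_digitVal_eq hy hcop (fun i => hc i.succ) (fun i => hd i.succ)
        (by simpa using htail)
    ext i
    exact Fin.cases (by simpa using hq.symm) (congrFun htail') i

lemma digitVal_ne_add_of_le (hxy : x < y) (hcop : x.Coprime y) :
    ∀ {m s : ℕ} {c d : Fin (m + 1) → ℕ}, (∀ i, c i ≤ x) → (∀ i, 1 ≤ d i) → 1 ≤ s →
      digitVal x y m c ≠ digitVal x y m d + s * x ^ (m + 1)
  | 0, s, c, d, hc, hd, hs, h => by
    rw [digitVal_zero, digitVal_zero, pow_one] at h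
    have := Nat.le_mul_of_pos_left x hs
    have := hc 0
    have := hd 0
    omega
  | m + 1, s, c, d, hc, hd, hs, h => by
    obtain ⟨q, hq, htail⟩ := exists_carry (by omega) hcop ((hc 0).trans_lt hxy) h
    have hq1 : 1 ≤ q := by
      refine Nat.pos_of_ne_zero ?_
      rintro rfl
      have := Nat.le_mul_of_pos_left x hs
      have := hc 0
      have := hd 0
      omega
    exact digitVal_ne_add_of_le hxy hcop (fun i => hc i.succ) (fun i => hd i.succ) hq1 htail

lemma digitVal_ne_add_of_isLdDigits (hxy : x < y) (hcop : x.Coprime y) :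
    ∀ {m s : ℕ} {c d : Fin (m + 1) → ℕ}, IsLdDigits x y m c → (∀ i, 1 ≤ d i) →
      digitVal x y m c ≠ digitVal x y m d + s * x ^ (m + 1)
  | 0, s, c, d, hc, hd, h => by
    rw [digitVal_zero, digitVal_zero, hc.zero] at h
    have := hd 0
    omega
  | m + 1, s, c, d, hc, hd, h => by
    obtain ⟨q, hq, htail⟩ := exists_carry (by omega) hcop (hc.lt hxy 0) h
    rcases hc.cons_cases with ⟨hc0, hle⟩ | htl
    · have hq1 : 1 ≤ q := by
        refine Nat.pos_of_ne_zero ?_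
        rintro rfl
        have := hd 0
        omega
      exact digitVal_ne_add_of_le hxy hcop hle (fun i => hd i.succ) hq1 htail
    · exact digitVal_ne_add_of_isLdDigits hxy hcop htl (fun i => hd i.succ) htail

end Digits

lemma IsLdDigits.eq_of_digitVal_modEq {x y m : ℕ} (hxy : x < y) (hcop : x.Coprime y)
    {c d : Fin (m + 1) → ℕ} (hc : IsLdDigits x y m c) (hd : IsLdDigits x y m d)
    (h : digitVal x y m c ≡ digitVal x y m d [MOD Fval m x y]) : c = d := by
  refine digits_eq_of_digitVal_eq (by omega) hcop (hc.lt hxy) (hd.lt hxy) ?_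
  wlog hle : digitVal x y m c ≤ digitVal x y m d generalizing c d
  · exact (this hd hc h.symm (le_of_not_ge hle)).symm
  obtain ⟨t, ht⟩ := (Nat.modEq_iff_dvd' hle).mp h
  obtain rfl | ht0 := Nat.eq_zero_or_pos t
  · omega
  · refine absurd ?_ (digitVal_ne_add_of_isLdDigits hxy hcop (s := 0) hd
      (d := fun i => c i + t) fun i => by omega)
    rw [digitVal_add_const, zero_mul, add_zero]
    rw [mul_comm] at ht
    omega

lemma isLdDigits_of_mem_Ld {n x y : ℕ} {c : Fin (n + 2) → ℕ} (hc : c ∈ Ld n x y) :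
    IsLdDigits x y n (fun i => c i.castSucc) := by
  obtain ⟨-, k, hlt, hk, hgt⟩ := hc
  exact ⟨k, fun i hi => hlt i.castSucc hi, hk, fun i hi => hgt i.castSucc hi i.is_le⟩

lemma injOn_tupleVal_Ld {n x y : ℕ} (hxy : x < y) (hcop : x.Coprime y) :
    Set.InjOn (fun c => (tupleVal n x y c : ZMod (Fval n x y))) (Ld n x y) := by
  intro c hc d hd h
  have hinit : (fun i : Fin (n + 1) => c i.castSucc) = fun i => d i.castSucc :=
    (isLdDigits_of_mem_Ld hc).eq_of_digitVal_modEq hxy hcop (isLdDigits_of_mem_Ld hd)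
      ((ZMod.natCast_eq_natCast_iff _ _ _).mp h)
  ext i
  exact Fin.lastCases (hc.1.trans hd.1.symm) (congrFun hinit) i

/-- The words of `L_d^n` whose distinguished `0` sits at position `k`. -/
def ldBlock (n x y : ℕ) (k : Fin (n + 1)) : Finset (Fin (n + 2) → ℕ) :=
  Fintype.piFinset fun i =>
    if (i : ℕ) < k then range y else if (i : ℕ) = k ∨ (i : ℕ) = n + 1 then {0} else Icc 1 x

section Counting

variable {n x y : ℕ}

lemma card_ldBlock (k : Fin (n + 1)) : #(ldBlock n x y k) = y ^ (k : ℕ) * x ^ (n - k) := by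
  have hk := k.is_le
  rw [ldBlock, Fintype.card_piFinset, Fin.prod_univ_eq_prod_range (fun j =>
    #(if j < k then range y else if j = k ∨ j = n + 1 then {0} else Icc 1 x)),
    prod_range_succ, ← prod_range_mul_prod_Ico _ (Nat.le_succ_of_le hk),
    prod_eq_prod_Ico_succ_bot (Nat.lt_succ_of_le hk)]
  have hlow : ∀ j ∈ range k, #(if j < k then range y
      else if j = k ∨ j = n + 1 then {0} else Icc 1 x) = y := fun j hj => by
    simp [mem_range.mp hj]
  have hhigh : ∀ j ∈ Ico ((k : ℕ) + 1) (n + 1), #(if j < k then range y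
      else if j = k ∨ j = n + 1 then {0} else Icc 1 x) = x := fun j hj => by
    rw [mem_Ico] at hj
    rw [if_neg (by omega), if_neg (by omega), Nat.card_Icc, Nat.add_sub_cancel]
  rw [prod_congr rfl hlow, prod_congr rfl hhigh]
  simp [show ¬n + 1 < (k : ℕ) by omega]

lemma disjoint_ldBlock_of_lt {k k' : Fin (n + 1)} (hkk' : k < k') :
    Disjoint (ldBlock n x y k) (ldBlock n x y k') := by
  refine disjoint_left.mpr fun c hc hc' => ?_
  rw [ldBlock, Fintype.mem_piFinset] at hc hc'
  have hk' := k'.is_le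
  have h := hc k'.castSucc
  have h' := hc' k'.castSucc
  rw [Fin.val_castSucc, if_neg (by omega), if_neg (by omega), mem_Icc] at h
  rw [Fin.val_castSucc, if_neg (by omega), if_pos (.inl rfl), mem_singleton] at h'
  omega

lemma Ld_eq_biUnion_ldBlock : Ld n x y = ↑(univ.biUnion (ldBlock n x y)) := by
  ext c
  simp only [Ld, Set.mem_ofPred_eq, coe_biUnion, coe_univ, Set.mem_univ, Set.iUnion_true,
    Set.mem_iUnion, mem_coe, ldBlock, Fintype.mem_piFinset]
  constructor
  · rintro ⟨hlast, k, hlt, hk, hgt⟩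
    refine ⟨k, fun i => ?_⟩
    split_ifs with hik hik'
    · simpa using hlt i hik
    · obtain h | h := hik'
      · simpa [show i = k.castSucc from Fin.ext h] using hk
      · simpa [show i = Fin.last (n + 1) from Fin.ext h] using hlast
    · have := i.is_lt
      simpa using hgt i (by omega) (by omega)
  · rintro ⟨k, h⟩
    have hk := k.is_le
    refine ⟨by simpa [show ¬n + 1 < (k : ℕ) by omega] using h (Fin.last (n + 1)), k,
      fun i hi => by simpa [hi] using h i, by simpa using h k.castSucc, fun i hi hin => ?_⟩
    simpa [show ¬(i : ℕ) < k by omega, show (i : ℕ) ≠ k by omega, show (i : ℕ) ≠ n + 1 by omega]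
      using h i

lemma ncard_Ld : (Ld n x y).ncard = Fval n x y := by
  rw [Ld_eq_biUnion_ldBlock, Set.ncard_coe_finset, card_biUnion, Fval,
    ← Fin.sum_univ_eq_sum_range (fun k => x ^ (n - k) * y ^ k)]
  · exact sum_congr rfl fun k _ => by rw [card_ldBlock, mul_comm]
  · intro k _ k' _ hne
    exact hne.lt_or_gt.elim disjoint_ldBlock_of_lt fun h => (disjoint_ldBlock_of_lt h).symm

end Counting

lemma Fval_pos {n x y : ℕ} (hy : 0 < y) : 0 < Fval n x y :=
  sum_pos' (fun _ _ => Nat.zero_le _) ⟨n, self_mem_range_succ n, by simpa using pow_pos hy n⟩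

theorem val_mod_F_bijective_general
    (n x y : ℕ) (hxy : x < y) (hcop : Nat.Coprime x y) :
    Function.Bijective
      (fun c : ↥(Ld n x y) => (tupleVal n x y c.val : ZMod (Fval n x y))) := by
  have : NeZero (Fval n x y) := ⟨(Fval_pos (by omega)).ne'⟩
  rw [Nat.bijective_iff_injective_and_card, Nat.card_coe_set_eq, ncard_Ld, Nat.card_zmod]
  exact ⟨Set.injOn_iff_injective.mp (injOn_tupleVal_Ld hxy hcop), rfl⟩

/-- The map `L_d^n → ℤ/Fℤ` sending a tuple `c` to `val(c) mod F`
is a bijection. -/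
theorem val_mod_F_bijective
    (n x y : ℕ) (hn : 1 ≤ n) (hx : 0 < x) (hxy : x < y) (hcop : Nat.Coprime x y) :
    Function.Bijective
      (fun c : ↥(Ld n x y) => (tupleVal n x y c.val : ZMod (Fval n x y))) :=
  val_mod_F_bijective_general n x y hxy hcop
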